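/- Let J be a finite nilpotent group acting by automorphisms on a finite nilpotent group N, and let φ : J → N be a crossed homomorphism whose restriction to each Sylow p-subgroup J_p of J is cohomologous (as a crossed homomorphism J_p → N) to the trivial map. Then φ is cohomologous to the trivial map. -/

import Mathlib

/-!
A crossed homomorphism `f` is a coboundary `j ↦ n⁻¹ * φ j n` exactly when `n` is fixed by the
affine action `j • n = φ j n * (f j)⁻¹` of `J` on `N`. Splitting `N` into the product of its Sylow
subgroups, which the action of `J` preserves, reduces the theorem to the case of a `q`-group `N`.
There the local hypothesis at `q` gives a point fixed by the Sylow `q`-subgroup of `J`, and the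
remaining Sylow subgroups of `J` are absorbed one at a time: if `H ⊴ J` fixes some point, its fixed
points form a coset of the `q`-group `N^H = fixedPointsSubgroup φ H`, so a `p`-subgroup with
`p ≠ q` normalizing `H` has a fixed point among them.
-/

open Subgroup

section CrossedHom

variable {J N : Type*} [Group J] [Group N]

def IsCrossedHom (φ : J →* MulAut N) (f : J → N) : Prop :=
  ∀ j j', f (j * j') = f j * φ j (f j')

def fixedPointsSubgroup (φ : J →* MulAut N) (H : Subgroup J) : Subgroup N where
  carrier := {n | ∀ h ∈ H, φ h n = n}
  one_mem' _ _ := map_one _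
  mul_mem' ha hb h hh := by rw [map_mul, ha h hh, hb h hh]
  inv_mem' ha h hh := by rw [map_inv, ha h hh]

namespace IsCrossedHom

variable {φ : J →* MulAut N} {f : J → N}

theorem map_one (hf : IsCrossedHom φ f) : f 1 = 1 := by
  simpa using hf 1 1

theorem comp {M : Type*} [Group M] {ψ : J →* MulAut M} (hf : IsCrossedHom φ f) (π : N →* M)
    (hπ : ∀ j n, π (φ j n) = ψ j (π n)) : IsCrossedHom ψ (π ∘ f) := fun j j' => by
  simp only [Function.comp_apply, hf j j', map_mul, hπ]

abbrev affineAction (hf : IsCrossedHom φ f) : MulAction J N where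
  smul j n := φ j n * (f j)⁻¹
  one_smul n := by
    change φ 1 n * (f 1)⁻¹ = n
    rw [hf.map_one, φ.map_one, MulAut.one_apply, inv_one, mul_one]
  mul_smul j j' n := by
    change φ (j * j') n * (f (j * j'))⁻¹ = φ j (φ j' n * (f j')⁻¹) * (f j)⁻¹
    rw [hf j j', map_mul, MulAut.mul_apply, map_mul, map_inv, mul_inv_rev, mul_assoc]

theorem exists_eq_coboundary_on_sup [Finite N] (hf : IsCrossedHom φ f) {H P : Subgroup J}
    [H.Normal] {p : ℕ} [Fact p.Prime] (hP : IsPGroup p P) (hpN : ¬ p ∣ Nat.card N) {n₀ : N}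
    (hn₀ : ∀ h ∈ H, f h = n₀⁻¹ * φ h n₀) :
    ∃ n : N, ∀ j ∈ H ⊔ P, f j = n⁻¹ * φ j n := by
  let := hf.affineAction
  have smul_eq_self : ∀ j n, j • n = n ↔ f j = n⁻¹ * φ j n := fun j n => by
    change φ j n * (f j)⁻¹ = n ↔ _
    rw [mul_inv_eq_iff_eq_mul, eq_inv_mul_iff_mul_eq, eq_comm]
  let X : SubMulAction P N :=
    { carrier := {n | ∀ h ∈ H, h • n = n}
      smul_mem' := fun x n hn h hh => by
        have hxh : (x : J)⁻¹ * h * x ∈ H := by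
          simpa using ‹H.Normal›.conj_mem h hh (x : J)⁻¹
        change h • (x : J) • n = (x : J) • n
        rw [smul_smul, show h * x = x * ((x : J)⁻¹ * h * x) by group, ← smul_smul,
          hn _ hxh] }
  -- `X` is the coset `N^H * n₀`
  have hX : Nat.card X = Nat.card (fixedPointsSubgroup φ H) := by
    refine Nat.card_congr (Equiv.subtypeEquiv (Equiv.mulRight n₀) fun m => ?_).symm
    change m ∈ fixedPointsSubgroup φ H ↔ ∀ h ∈ H, φ h (m * n₀) * (f h)⁻¹ = m * n₀
    refine forall₂_congr fun h hh => ?_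
    rw [map_mul, mul_assoc, hn₀ h hh, mul_inv_rev, inv_inv, mul_inv_cancel_left, mul_left_inj]
  have hpX : ¬ p ∣ Nat.card X := by
    rw [hX]
    exact fun h => hpN (h.trans (card_subgroup_dvd_card _))
  obtain ⟨⟨n, hnH⟩, hnP⟩ := hP.nonempty_fixed_point_of_prime_not_dvd_card X hpX
  refine ⟨n, fun j hj => (smul_eq_self j n).mp ?_⟩
  suffices H ⊔ P ≤ MulAction.stabilizer J n from this hj
  exact sup_le (fun h hh => hnH h hh) fun x hx => congrArg Subtype.val (hnP ⟨x, hx⟩)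

theorem exists_eq_coboundary_of_coprime_index [Finite J] [Group.IsNilpotent J] [Finite N]
    (hf : IsCrossedHom φ f) (H : Subgroup J) [H.Normal] (hH : H.index.Coprime (Nat.card N))
    {n₀ : N} (hn₀ : ∀ h ∈ H, f h = n₀⁻¹ * φ h n₀) :
    ∃ n : N, ∀ j, f j = n⁻¹ * φ j n := by
  induction hk : H.index using Nat.strong_induction_on generalizing H n₀ with
  | _ k ih =>
  by_cases hHtop : H = ⊤
  · exact ⟨n₀, fun j => hn₀ j (hHtop ▸ mem_top j)⟩
  obtain ⟨p, hp, hpH⟩ := Nat.exists_prime_and_dvd (mt index_eq_one.mp hHtop)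
  have := Fact.mk hp
  let P : Sylow p J := default
  have hPH : ¬ (P : Subgroup J) ≤ H := fun hle =>
    P.not_dvd_index (hpH.trans (index_dvd_of_le hle))
  have hpN : ¬ p ∣ Nat.card N := hp.coprime_iff_not_dvd.mp (hH.coprime_dvd_left hpH)
  obtain ⟨n, hn⟩ := hf.exists_eq_coboundary_on_sup P.isPGroup' hpN hn₀
  exact ih _ (hk ▸ index_strictAnti (left_lt_sup.mpr hPH)) (H ⊔ P)
    (hH.coprime_dvd_left (index_dvd_of_le le_sup_left)) hn rfl

theorem exists_eq_coboundary_of_isPGroup [Finite J] [Group.IsNilpotent J] [Finite N]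
    {q : ℕ} [hq : Fact q.Prime] (hN : IsPGroup q N) (hf : IsCrossedHom φ f) {n₀ : N}
    (hn₀ : ∀ j : J, (∃ k : ℕ, orderOf j = q ^ k) → f j = n₀⁻¹ * φ j n₀) :
    ∃ n : N, ∀ j, f j = n⁻¹ * φ j n := by
  let P : Sylow q J := default
  obtain ⟨a, ha⟩ := IsPGroup.iff_card.mp hN
  have hP : (P : Subgroup J).index.Coprime (Nat.card N) := by
    rw [ha]
    exact (Nat.coprime_comm.mp (hq.out.coprime_iff_not_dvd.mpr P.not_dvd_index)).pow_right a
  refine hf.exists_eq_coboundary_of_coprime_index P hP fun j hj => hn₀ j ?_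
  obtain ⟨k, hk⟩ := IsPGroup.iff_orderOf.mp P.isPGroup' ⟨j, hj⟩
  exact ⟨k, by rwa [orderOf_mk] at hk⟩

end IsCrossedHom

end CrossedHom

instance {n : ℕ} (p : n.primeFactors) : Fact (p : ℕ).Prime :=
  ⟨Nat.prime_of_mem_primeFactors p.2⟩

section SylowDecomposition

variable {N : Type*} [Group N] [Finite N] [Group.IsNilpotent N]

instance {p : ℕ} [Fact p.Prime] (P : Sylow p N) : (P : Subgroup N).Characteristic :=
  Sylow.characteristic_of_normal P inferInstance

theorem Sylow.commute_of_ne {p q : ℕ} [Fact p.Prime] [Fact q.Prime] (hpq : p ≠ q)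
    (P : Sylow p N) (Q : Sylow q N) {x y : N} (hx : x ∈ P) (hy : y ∈ Q) : Commute x y :=
  commute_of_normal_of_disjoint _ _ inferInstance inferInstance
    (IsPGroup.disjoint_of_ne p q hpq _ _ P.isPGroup' Q.isPGroup') x y hx hy

noncomputable def sylowEquiv : (∀ p : (Nat.card N).primeFactors, ∀ P : Sylow p N, P) ≃* N :=
  Sylow.directProductOfNormal fun _ => inferInstance

theorem sylowEquiv_apply (u : ∀ p : (Nat.card N).primeFactors, ∀ P : Sylow p N, P) :
    sylowEquiv u = Finset.univ.noncommProd (fun p => (u p default : N)) fun p _ q _ hpq =>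
      Sylow.commute_of_ne (Subtype.coe_ne_coe.mpr hpq) _ _ (u p default).2 (u q default).2 :=
  rfl

theorem map_sylowEquiv (σ : MulAut N) (u : ∀ p : (Nat.card N).primeFactors, ∀ P : Sylow p N, P) :
    σ (sylowEquiv u) = sylowEquiv fun p P => MulAut.characteristic P σ (u p P) := by
  rw [sylowEquiv_apply, sylowEquiv_apply]
  exact Finset.map_noncommProd _ _ _ σ

noncomputable def sylowProj {p : (Nat.card N).primeFactors} (P : Sylow p N) : N →* P :=
  (Pi.evalMonoidHom _ P).comp ((Pi.evalMonoidHom _ p).comp sylowEquiv.symm.toMonoidHom)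

theorem sylowProj_sylowEquiv {p : (Nat.card N).primeFactors} (P : Sylow p N)
    (u : ∀ p : (Nat.card N).primeFactors, ∀ P : Sylow p N, P) :
    sylowProj P (sylowEquiv u) = u p P := by
  simp [sylowProj]

theorem sylowProj_map {p : (Nat.card N).primeFactors} (P : Sylow p N) (σ : MulAut N) (n : N) :
    sylowProj P (σ n) = MulAut.characteristic P σ (sylowProj P n) := by
  obtain ⟨u, rfl⟩ := sylowEquiv.surjective n
  rw [map_sylowEquiv, sylowProj_sylowEquiv, sylowProj_sylowEquiv]

theorem eq_of_sylowProj_eq {x y : N}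
    (h : ∀ (p : (Nat.card N).primeFactors) (P : Sylow p N), sylowProj P x = sylowProj P y) :
    x = y :=
  sylowEquiv.symm.injective (funext fun p => funext (h p))

end SylowDecomposition

/-- For finite nilpotent `J`, `N` with `J` acting on `N`, a crossed homomorphism
`f : J → N` whose restriction to each Sylow `p`-subgroup `J_p` (the set of elements
of `p`-power order) is cohomologous to the trivial map is itself cohomologous to
the trivial map. -/
theorem stmt_16 {N J : Type*} [Group N] [Group J] [Finite N] [Finite J]
    [Group.IsNilpotent N] [Group.IsNilpotent J]
    (φ : J →* MulAut N) (f : J → N)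
    (hf : ∀ j j', f (j * j') = f j * φ j (f j'))
    (hloc : ∀ p : ℕ, p.Prime → ∃ np : N, ∀ j : J,
      (∃ k : ℕ, orderOf j = p ^ k) → f j = np⁻¹ * φ j np) :
    ∃ n : N, ∀ j : J, f j = n⁻¹ * φ j n := by
  have hcomp : ∀ (p : (Nat.card N).primeFactors) (P : Sylow p N),
      ∃ m : P, ∀ j, sylowProj P (f j) = m⁻¹ * MulAut.characteristic P (φ j) m := by
    intro p P
    obtain ⟨np, hnp⟩ := hloc p Fact.out
    have hfP : IsCrossedHom ((MulAut.characteristic P).comp φ) (sylowProj P ∘ f) :=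
      IsCrossedHom.comp hf (sylowProj P) fun j n => sylowProj_map P (φ j) n
    refine hfP.exists_eq_coboundary_of_isPGroup P.isPGroup' (n₀ := sylowProj P np) fun j hj => ?_
    rw [Function.comp_apply, hnp j hj, map_mul, map_inv, sylowProj_map]
    rfl
  choose m hm using hcomp
  refine ⟨sylowEquiv m, fun j => eq_of_sylowProj_eq fun p P => ?_⟩
  rw [hm, map_mul, map_inv, sylowProj_map, sylowProj_sylowEquiv]
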